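/- arXiv:1508.03005 — 3 statements merged into one kernel-verified Lean document; each statement's English description precedes it below -/
import Mathlib

section
/- Let F : Fin 2 → Fin 2 → Fin 2 → Fin 2 → ℝ be a tensor symmetric in its last three indices, and let d be the 2×2 matrix [[0,1],[-1,0]]. Define Ω_{imnp} = (1/2) Σ_{r₁,r₂,s₁,s₂} F^{r₁}_{s₁ i m} F^{r₂}_{s₂ n p} d^{s₁ s₂} d_{r₁ r₂}. Then the symmetrization Ω[1]_{imnp} = (1/3)(Ω_{imnp} + Ω_{mnip} + Ω_{nimp}) is fully symmetric in all four indices i, m, n, p. -/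
/-- A cubic coefficient array on ℝ²: one upper index, three lower indices in {1,2}. -/
abbrev CubicTensor := Fin 2 → Fin 2 → Fin 2 → Fin 2 → ℝ

/-- Symmetry in the three lower indices. -/
def SymLower (F : CubicTensor) : Prop :=
  ∀ i m n p, F i m n p = F i n m p ∧ F i m n p = F i m p n

def G1111 (F : CubicTensor) : ℝ := F 0 0 0 0 * F 1 0 0 1 - F 0 0 0 1 * F 1 0 0 0
def G1112 (F : CubicTensor) : ℝ := F 0 0 0 0 * F 1 0 1 1 - F 0 0 1 1 * F 1 0 0 0
def G1122 (F : CubicTensor) : ℝ := F 0 0 0 0 * F 1 1 1 1 - F 0 1 1 1 * F 1 0 0 0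
def G1212 (F : CubicTensor) : ℝ := F 0 0 0 1 * F 1 0 1 1 - F 0 0 1 1 * F 1 0 0 1
def G1222 (F : CubicTensor) : ℝ := F 0 0 0 1 * F 1 1 1 1 - F 0 1 1 1 * F 1 0 0 1
def G2222 (F : CubicTensor) : ℝ := F 0 0 1 1 * F 1 1 1 1 - F 0 1 1 1 * F 1 0 1 1
/-- The skew-symmetric 2×2 matrix d (both d_{ij} and d^{ij}). -/
def dMat : Matrix (Fin 2) (Fin 2) ℝ := !![0, 1; -1, 0]

/-- Ω_{imnp} = (1/2) Σ F^{r₁}_{s₁ i m} F^{r₂}_{s₂ n p} d^{s₁s₂} d_{r₁r₂}. -/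
noncomputable def Omega (F : CubicTensor) (i m n p : Fin 2) : ℝ :=
  (1/2) * ∑ r1 : Fin 2, ∑ r2 : Fin 2, ∑ s1 : Fin 2, ∑ s2 : Fin 2,
    F r1 s1 i m * F r2 s2 n p * dMat s1 s2 * dMat r1 r2

/-- Ω[1]: the symmetrization of Ω. -/
noncomputable def Omega1 (F : CubicTensor) (i m n p : Fin 2) : ℝ :=
  (1/3) * (Omega F i m n p + Omega F m n i p + Omega F n i m p)

lemma Omega_eq (F : CubicTensor) (i m n p : Fin 2) :
    Omega F i m n p = (1/2) * (F 0 0 i m * F 1 1 n p - F 0 1 i m * F 1 0 n p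
      - F 1 0 i m * F 0 1 n p + F 1 1 i m * F 0 0 n p) := by
  simp [Omega, dMat, Fin.sum_univ_two]
  ring

set_option maxHeartbeats 2000000 in
theorem Omega1_fully_symmetric (F : CubicTensor) (hF : SymLower F) :
    ∀ i m n p : Fin 2,
      Omega1 F i m n p = Omega1 F m i n p ∧
      Omega1 F i m n p = Omega1 F i n m p ∧
      Omega1 F i m n p = Omega1 F i m p n := by
  have h010 : ∀ r, F r 0 1 0 = F r 0 0 1 := fun r => (hF r 0 1 0).2
  have h100 : ∀ r, F r 1 0 0 = F r 0 0 1 := by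
    intro r; rw [(hF r 1 0 0).1, (hF r 0 1 0).2]
  have h101 : ∀ r, F r 1 0 1 = F r 0 1 1 := fun r => (hF r 1 0 1).1
  have h110 : ∀ r, F r 1 1 0 = F r 0 1 1 := by
    intro r; rw [(hF r 1 1 0).2, (hF r 1 0 1).1]
  intro i m n p
  fin_cases i <;> fin_cases m <;> fin_cases n <;> fin_cases p <;>
    refine ⟨?_, ?_, ?_⟩ <;>
    simp only [Omega1, Omega_eq, Fin.mk_zero, Fin.mk_one, Fin.isValue, h010, h100, h101, h110] <;>
    ring
end

section
/- With F obtained from F̃ by right composition with a 2×2 real matrix T (F^i_{mnp} = Σ F̃^i_{m̃ñp̃} T^m̃_m T^ñ_n T^p̃_p), one has G_{1212}(F) = det(T) · ω̃[4](z¹,z²,z³,z⁴) where z¹ = T¹₁, z² = T²₁, z³ = T¹₂, z⁴ = T²₂ and ω̃[4] = G̃_{1111}(z¹)²(z³)² + G̃_{1112}(z¹)²z³z⁴ + G̃_{1212}(z¹)²(z⁴)² + G̃_{1112}z¹z²(z³)² + (G̃_{1212}+G̃_{1122})z¹z²z³z⁴ + G̃_{1222}z¹z²(z⁴)² + G̃_{1212}(z²)²(z³)²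 + G̃_{1222}(z²)²z³z⁴ + G̃_{2222}(z²)²(z⁴)². -/
/-- The quartic form ω[4] built from the determinants of F (with the corrected
last coefficient G2222). -/
def omega4 (F : CubicTensor) (z1 z2 z3 z4 : ℝ) : ℝ :=
  G1111 F * z1^2 * z3^2 + G1112 F * z1^2 * z3 * z4 + G1212 F * z1^2 * z4^2
    + G1112 F * z1 * z2 * z3^2 + (G1212 F + G1122 F) * z1 * z2 * z3 * z4
    + G1222 F * z1 * z2 * z4^2 + G1212 F * z2^2 * z3^2
    + G1222 F * z2^2 * z3 * z4 + G2222 F * z2^2 * z4^2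

theorem right_composition_G1212 (F Ft : CubicTensor) (T : Matrix (Fin 2) (Fin 2) ℝ)
    (hFt : SymLower Ft) (hT : IsUnit T.det)
    (hrel : ∀ i m n p, F i m n p =
      ∑ mt : Fin 2, ∑ nt : Fin 2, ∑ pt : Fin 2,
        Ft i mt nt pt * T mt m * T nt n * T pt p) :
    G1212 F = T.det * omega4 Ft (T 0 0) (T 1 0) (T 0 1) (T 1 1) := by
  have h010 : ∀ i, Ft i 0 1 0 = Ft i 0 0 1 := fun i => by
    rw [(hFt i 0 0 1).2]
  have h100 : ∀ i, Ft i 1 0 0 = Ft i 0 0 1 := fun i => by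
    rw [(hFt i 1 0 0).1, (hFt i 0 1 0).2]
  have h101 : ∀ i, Ft i 1 0 1 = Ft i 0 1 1 := fun i => by
    rw [(hFt i 1 0 1).1]
  have h110 : ∀ i, Ft i 1 1 0 = Ft i 0 1 1 := fun i => by
    rw [(hFt i 1 1 0).2, h101]
  simp only [G1212, omega4, G1111, G1112, G1122, G1222, G2222, hrel,
    Fin.sum_univ_two, Matrix.det_fin_two, h010, h100, h101, h110]
  ring
end

section
/- Let F be a coefficient tensor on ℝ² symmetric in its three lower indices, and let F̃ be defined by the full tensorial change-of-basis rule F̃^ĩ_{m̃ñp̃} = Σ F^i_{mnp} T^ĩ_i S^m_m̃ S^n_ñ S^p_p̃, where S is an invertible 2×2 matrix and T = S⁻¹. Then the quartic form ω[1] is invariant: for all z̃ ∈ ℝ², ω[1](F̃)(z̃¹, z̃²) = ω[1](F)(z¹, z²) where z = S·z̃. Equivalently, defining Ω[1]_{imnp} as the symmetrized product of determinants of F, one has Ω̃[1]_{ĩm̃ñp̃} = Σ_{i,m,n,p} Ω[1]_{imnp} S^i_ĩ S^m_m̃ S^n_ñ S^p_p̃, i.e. the components of ω[1] transform as a covariant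 tensor of rank 4. -/
/-- The binary quartic form ω[1] associated with F. -/
def omega1 (F : CubicTensor) (u v : ℝ) : ℝ :=
  G1111 F * u^4 + 2 * G1112 F * u^3 * v + (3 * G1212 F + G1122 F) * u^2 * v^2
    + 2 * G1222 F * u * v^3 + G2222 F * v^4

/-- Auxiliary: partial transform of F (upper index and first lower index transformed). -/
noncomputable def Cmat (F : CubicTensor) (T S : Matrix (Fin 2) (Fin 2) ℝ) (r s n p : Fin 2) : ℝ :=
  ∑ i : Fin 2, ∑ m : Fin 2, F i m n p * T r i * S m s

set_option maxHeartbeats 4000000 in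
theorem omega1_tensorial_behavior (F Ft : CubicTensor)
    (S T : Matrix (Fin 2) (Fin 2) ℝ)
    (hF : SymLower F) (hS : IsUnit S.det) (hT : T = S⁻¹)
    (hrel : ∀ it mt nt pt, Ft it mt nt pt =
      ∑ i : Fin 2, ∑ m : Fin 2, ∑ n : Fin 2, ∑ p : Fin 2,
        F i m n p * T it i * S m mt * S n nt * S p pt) :
    (∀ zt : Fin 2 → ℝ,
        omega1 Ft (zt 0) (zt 1) = omega1 F ((S.mulVec zt) 0) ((S.mulVec zt) 1)) ∧
    (∀ it mt nt pt : Fin 2,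
        Omega1 Ft it mt nt pt =
          ∑ i : Fin 2, ∑ m : Fin 2, ∑ n : Fin 2, ∑ p : Fin 2,
            Omega1 F i m n p * S i it * S m mt * S n nt * S p pt) := by
  have hdet : S 0 0 * S 1 1 - S 0 1 * S 1 0 = S.det := (Matrix.det_fin_two S).symm
  have hdne : S 0 0 * S 1 1 - S 0 1 * S 1 0 ≠ 0 := by
    rw [hdet]; exact hS.ne_zero
  have hST : S * T = 1 := by rw [hT]; exact Matrix.mul_nonsing_inv S hS
  have e00 := congrFun (congrFun hST 0) 0
  have e01 := congrFun (congrFun hST 0) 1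
  have e10 := congrFun (congrFun hST 1) 0
  have e11 := congrFun (congrFun hST 1) 1
  simp [Matrix.mul_apply, Fin.sum_univ_two, Matrix.one_apply] at e00 e01 e10 e11
  have t00 : T 0 0 = S 1 1 / (S 0 0 * S 1 1 - S 0 1 * S 1 0) := by
    rw [eq_div_iff hdne]; linear_combination S 1 1 * e00 - S 0 1 * e10
  have t01 : T 0 1 = -(S 0 1) / (S 0 0 * S 1 1 - S 0 1 * S 1 0) := by
    field_simp; linear_combination S 1 1 * e01 - S 0 1 * e11
  have t10 : T 1 0 = -(S 1 0) / (S 0 0 * S 1 1 - S 0 1 * S 1 0) := by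
    rw [eq_div_iff hdne]; linear_combination S 0 0 * e10 - S 1 0 * e00
  have t11 : T 1 1 = S 0 0 / (S 0 0 * S 1 1 - S 0 1 * S 1 0) := by
    field_simp; linear_combination S 0 0 * e11 - S 1 0 * e01
  have f1 : ∀ i, F i 0 1 0 = F i 0 0 1 := fun i => (hF i 0 1 0).2
  have f2 : ∀ i, F i 1 0 0 = F i 0 0 1 := fun i => (hF i 1 0 0).1.trans (f1 i)
  have f3 : ∀ i, F i 1 0 1 = F i 0 1 1 := fun i => (hF i 1 0 1).1
  have f4 : ∀ i, F i 1 1 0 = F i 0 1 1 := fun i => (hF i 1 1 0).2.trans (f3 i)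
  have d00 : dMat 0 0 = 0 := by norm_num [dMat]
  have d01 : dMat 0 1 = 1 := by norm_num [dMat]
  have d10 : dMat 1 0 = -1 := by norm_num [dMat]
  have d11 : dMat 1 1 = 0 := by norm_num [dMat]
  constructor
  · intro zt
    simp only [omega1, G1111, G1112, G1122, G1212, G1222, G2222, hrel,
      Fin.sum_univ_two, Matrix.mulVec, dotProduct,
      t00, t01, t10, t11, f1, f2, f3, f4]
    generalize hD : S 0 0 * S 1 1 - S 0 1 * S 1 0 = D at hdne ⊢
    field_simp
    subst hD
    ring
  have hfac : ∀ r s a b : Fin 2, Ft r s a b =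
      ∑ n : Fin 2, ∑ p : Fin 2, Cmat F T S r s n p * S n a * S p b := by
    intro r s a b
    simp only [hrel, Cmat, Fin.sum_univ_two]
    ring
  have hK : ∀ n p n' p' : Fin 2,
      Cmat F T S 0 0 n p * Cmat F T S 1 1 n' p' - Cmat F T S 0 1 n p * Cmat F T S 1 0 n' p'
        - Cmat F T S 1 0 n p * Cmat F T S 0 1 n' p' + Cmat F T S 1 1 n p * Cmat F T S 0 0 n' p'
        = 2 * Omega F n p n' p' := by
    intro n p n' p'
    simp only [Cmat, Omega, Fin.sum_univ_two, d00, d01, d10, d11, mul_zero, zero_mul,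
      add_zero, zero_add, mul_one, mul_neg, neg_mul, one_mul, neg_neg,
      t00, t01, t10, t11]
    generalize hD : S 0 0 * S 1 1 - S 0 1 * S 1 0 = D at hdne ⊢
    field_simp
    subst hD
    ring
  have omega_trans : ∀ it mt nt pt : Fin 2,
      Omega Ft it mt nt pt =
        ∑ i : Fin 2, ∑ m : Fin 2, ∑ n : Fin 2, ∑ p : Fin 2,
          Omega F i m n p * S i it * S m mt * S n nt * S p pt := by
    intro it mt nt pt
    have e1 : Omega Ft it mt nt pt = (1/2) * (Ft 0 0 it mt * Ft 1 1 nt pt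
        - Ft 0 1 it mt * Ft 1 0 nt pt - Ft 1 0 it mt * Ft 0 1 nt pt
        + Ft 1 1 it mt * Ft 0 0 nt pt) := by
      simp only [Omega, Fin.sum_univ_two, d00, d01, d10, d11, mul_zero, zero_mul,
        add_zero, zero_add, mul_one, mul_neg, neg_mul, one_mul, neg_neg]
      ring
    rw [e1]
    have eK : ∀ n p n' p' : Fin 2, Omega F n p n' p' =
        (1/2) * (Cmat F T S 0 0 n p * Cmat F T S 1 1 n' p' - Cmat F T S 0 1 n p * Cmat F T S 1 0 n' p'
        - Cmat F T S 1 0 n p * Cmat F T S 0 1 n' p' + Cmat F T S 1 1 n p * Cmat F T S 0 0 n' p') := by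
      intro n p n' p'
      have := hK n p n' p'
      linarith
    simp only [hfac, Fin.sum_univ_two]
    linear_combination (1/2) * S 0 it * S 0 mt * S 0 nt * S 0 pt * hK 0 0 0 0 +
        (1/2) * S 0 it * S 0 mt * S 0 nt * S 1 pt * hK 0 0 0 1 +
        (1/2) * S 0 it * S 0 mt * S 1 nt * S 0 pt * hK 0 0 1 0 +
        (1/2) * S 0 it * S 0 mt * S 1 nt * S 1 pt * hK 0 0 1 1 +
        (1/2) * S 0 it * S 1 mt * S 0 nt * S 0 pt * hK 0 1 0 0 +
        (1/2) * S 0 it * S 1 mt * S 0 nt * S 1 pt * hK 0 1 0 1 +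
        (1/2) * S 0 it * S 1 mt * S 1 nt * S 0 pt * hK 0 1 1 0 +
        (1/2) * S 0 it * S 1 mt * S 1 nt * S 1 pt * hK 0 1 1 1 +
        (1/2) * S 1 it * S 0 mt * S 0 nt * S 0 pt * hK 1 0 0 0 +
        (1/2) * S 1 it * S 0 mt * S 0 nt * S 1 pt * hK 1 0 0 1 +
        (1/2) * S 1 it * S 0 mt * S 1 nt * S 0 pt * hK 1 0 1 0 +
        (1/2) * S 1 it * S 0 mt * S 1 nt * S 1 pt * hK 1 0 1 1 +
        (1/2) * S 1 it * S 1 mt * S 0 nt * S 0 pt * hK 1 1 0 0 +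
        (1/2) * S 1 it * S 1 mt * S 0 nt * S 1 pt * hK 1 1 0 1 +
        (1/2) * S 1 it * S 1 mt * S 1 nt * S 0 pt * hK 1 1 1 0 +
        (1/2) * S 1 it * S 1 mt * S 1 nt * S 1 pt * hK 1 1 1 1
  · intro it mt nt pt
    simp only [Omega1, omega_trans, Fin.sum_univ_two]
    ring
end
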